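/- The inequality 1 > (1−q)·x/(sin x) + q·x/(tan x) holds for all x in (0, π/2) if and only if q ≥ 1 − 2/π. -/

import Mathlib

/-!
Clearing denominators, the inequality reads `x - sin x < q * (x * (1 - cos x))`. Letting
`x → π/2` forces `q ≥ 1 - 2/π`. Conversely it suffices to treat `q = 1 - 2/π`, where the
inequality says that `D x = π sin x - 2x - (π - 2) x cos x` is positive on `(0, π/2)`.
`D` vanishes at both endpoints, and `D'''` is strictly decreasing and changes sign once there.
Since `D''` and `D'` vanish at `0` and are negative at `π/2`, the single sign change propagates
from `D'''` to `D''` and then to `D'`, so `D` first increases and then decreases, hence is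
positive.
-/

open Real Set

def SignChangesOnce (f : ℝ → ℝ) (a b : ℝ) : Prop :=
  ∃ c ∈ Ioo a b, (∀ x ∈ Ioo a c, 0 < f x) ∧ ∀ x ∈ Ioo c b, f x < 0

section SignChangesOnce

variable {f f' : ℝ → ℝ} {a b : ℝ}

theorem strictMonoOn_Icc_of_hasDerivAt_pos (hd : ∀ x ∈ Icc a b, HasDerivAt f (f' x) x)
    (hpos : ∀ x ∈ Ioo a b, 0 < f' x) : StrictMonoOn f (Icc a b) := by
  refine strictMonoOn_of_deriv_pos (convex_Icc a b)
    (fun x hx => (hd x hx).continuousAt.continuousWithinAt) fun x hx => ?_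
  rw [interior_Icc] at hx
  rw [(hd x (Ioo_subset_Icc_self hx)).deriv]
  exact hpos x hx

theorem strictAntiOn_Icc_of_hasDerivAt_neg (hd : ∀ x ∈ Icc a b, HasDerivAt f (f' x) x)
    (hneg : ∀ x ∈ Ioo a b, f' x < 0) : StrictAntiOn f (Icc a b) := by
  refine strictAntiOn_of_deriv_neg (convex_Icc a b)
    (fun x hx => (hd x hx).continuousAt.continuousWithinAt) fun x hx => ?_
  rw [interior_Icc] at hx
  rw [(hd x (Ioo_subset_Icc_self hx)).deriv]
  exact hneg x hx

theorem SignChangesOnce.of_strictAntiOn (hab : a < b) (hf : ContinuousOn f (Icc a b))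
    (hanti : StrictAntiOn f (Icc a b)) (ha : 0 < f a) (hb : f b < 0) :
    SignChangesOnce f a b := by
  obtain ⟨c, hc, hfc⟩ := intermediate_value_Ioo' hab.le hf ⟨hb, ha⟩
  refine ⟨c, hc, fun x hx => ?_, fun x hx => ?_⟩
  · exact hfc ▸ hanti ⟨hx.1.le, (hx.2.trans hc.2).le⟩ (Ioo_subset_Icc_self hc) hx.2
  · exact hfc ▸ hanti (Ioo_subset_Icc_self hc) ⟨(hc.1.trans hx.1).le, hx.2.le⟩ hx.1

theorem SignChangesOnce.exists_strictMonoOn_strictAntiOn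
    (hd : ∀ x ∈ Icc a b, HasDerivAt f (f' x) x) (h : SignChangesOnce f' a b) :
    ∃ c ∈ Ioo a b, StrictMonoOn f (Icc a c) ∧ StrictAntiOn f (Icc c b) := by
  obtain ⟨c, hc, hpos, hneg⟩ := h
  exact ⟨c, hc,
    strictMonoOn_Icc_of_hasDerivAt_pos (fun x hx => hd x ⟨hx.1, hx.2.trans hc.2.le⟩) hpos,
    strictAntiOn_Icc_of_hasDerivAt_neg (fun x hx => hd x ⟨hc.1.le.trans hx.1, hx.2⟩) hneg⟩

theorem SignChangesOnce.of_deriv (hd : ∀ x ∈ Icc a b, HasDerivAt f (f' x) x)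
    (h : SignChangesOnce f' a b) (ha : f a = 0) (hb : f b < 0) : SignChangesOnce f a b := by
  obtain ⟨c, hc, hmono, hanti⟩ := h.exists_strictMonoOn_strictAntiOn hd
  have hfc : 0 < f c := ha ▸ hmono (left_mem_Icc.2 hc.1.le) (right_mem_Icc.2 hc.1.le) hc.1
  obtain ⟨d, hdcb, hpos, hneg⟩ := SignChangesOnce.of_strictAntiOn hc.2
    (fun x hx => (hd x ⟨hc.1.le.trans hx.1, hx.2⟩).continuousAt.continuousWithinAt)
    hanti hfc hb
  refine ⟨d, ⟨hc.1.trans hdcb.1, hdcb.2⟩, fun x hx => ?_, hneg⟩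
  rcases le_or_gt x c with hxc | hxc
  · exact ha ▸ hmono (left_mem_Icc.2 hc.1.le) ⟨hx.1.le, hxc⟩ hx.1
  · exact hpos x ⟨hxc, hx.2⟩

theorem SignChangesOnce.pos_of_deriv (hd : ∀ x ∈ Icc a b, HasDerivAt f (f' x) x)
    (h : SignChangesOnce f' a b) (ha : f a = 0) (hb : f b = 0) : ∀ x ∈ Ioo a b, 0 < f x := by
  obtain ⟨c, hc, hmono, hanti⟩ := h.exists_strictMonoOn_strictAntiOn hd
  intro x hx
  rcases le_or_gt x c with hxc | hxc
  · exact ha ▸ hmono (left_mem_Icc.2 hc.1.le) ⟨hx.1.le, hxc⟩ hx.1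
  · exact hb ▸ hanti ⟨hxc.le, hx.2.le⟩ (right_mem_Icc.2 hc.2.le) hx.2

end SignChangesOnce

noncomputable def huygensDefect (x : ℝ) : ℝ := π * sin x - 2 * x - (π - 2) * (x * cos x)
noncomputable def huygensDefect' (x : ℝ) : ℝ := 2 * cos x - 2 + (π - 2) * (x * sin x)
noncomputable def huygensDefect'' (x : ℝ) : ℝ := (π - 4) * sin x + (π - 2) * (x * cos x)
noncomputable def huygensDefect''' (x : ℝ) : ℝ := (2 * π - 6) * cos x - (π - 2) * (x * sin x)

theorem hasDerivAt_huygensDefect (x : ℝ) : HasDerivAt huygensDefect (huygensDefect' x) x :=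
  ((((hasDerivAt_sin x).const_mul π).fun_sub ((hasDerivAt_id' x).const_mul 2)).fun_sub
    (((hasDerivAt_id' x).fun_mul (hasDerivAt_cos x)).const_mul (π - 2))).congr_deriv
    (by rw [huygensDefect']; ring)

theorem hasDerivAt_huygensDefect' (x : ℝ) : HasDerivAt huygensDefect' (huygensDefect'' x) x :=
  ((((hasDerivAt_cos x).const_mul 2).sub_const 2).fun_add
    (((hasDerivAt_id' x).fun_mul (hasDerivAt_sin x)).const_mul (π - 2))).congr_deriv
    (by rw [huygensDefect'']; ring)

theorem hasDerivAt_huygensDefect'' (x : ℝ) :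
    HasDerivAt huygensDefect'' (huygensDefect''' x) x :=
  (((hasDerivAt_sin x).const_mul (π - 4)).fun_add
    (((hasDerivAt_id' x).fun_mul (hasDerivAt_cos x)).const_mul (π - 2))).congr_deriv
    (by rw [huygensDefect''']; ring)

theorem hasDerivAt_huygensDefect''' (x : ℝ) :
    HasDerivAt huygensDefect''' ((8 - 3 * π) * sin x - (π - 2) * (x * cos x)) x :=
  (((hasDerivAt_cos x).const_mul (2 * π - 6)).fun_sub
    (((hasDerivAt_id' x).fun_mul (hasDerivAt_sin x)).const_mul (π - 2))).congr_deriv (by ring)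

theorem signChangesOnce_huygensDefect''' : SignChangesOnce huygensDefect''' 0 (π / 2) := by
  have hπ := pi_gt_three
  refine .of_strictAntiOn pi_div_two_pos
    (fun x _ => (hasDerivAt_huygensDefect''' x).continuousAt.continuousWithinAt)
    (strictAntiOn_Icc_of_hasDerivAt_neg (fun x _ => hasDerivAt_huygensDefect''' x)
      fun x hx => ?_) ?_ ?_
  · have hsin : 0 < sin x := sin_pos_of_pos_of_lt_pi hx.1 (by linarith [hx.2])
    have hcos : 0 < cos x := cos_pos_of_mem_Ioo ⟨by linarith [hx.1], hx.2⟩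
    nlinarith [mul_pos hx.1 hcos]
  · simp [huygensDefect''']
    linarith
  · simp [huygensDefect''']
    nlinarith

theorem huygensDefect_pos {x : ℝ} (hx : x ∈ Ioo 0 (π / 2)) : 0 < huygensDefect x := by
  have hπ := pi_lt_d2
  have h'' : SignChangesOnce huygensDefect'' 0 (π / 2) :=
    signChangesOnce_huygensDefect'''.of_deriv (fun x _ => hasDerivAt_huygensDefect'' x)
      (by simp [huygensDefect'']) (by simp [huygensDefect'']; linarith)
  have h' : SignChangesOnce huygensDefect' 0 (π / 2) :=
    h''.of_deriv (fun x _ => hasDerivAt_huygensDefect' x)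
      (by simp [huygensDefect']) (by simp [huygensDefect']; nlinarith [pi_gt_three])
  exact h'.pos_of_deriv (fun x _ => hasDerivAt_huygensDefect x)
    (by simp [huygensDefect]) (by simp [huygensDefect]; ring) x hx

theorem sub_sin_lt_of_mem_Ioo {x : ℝ} (hx : x ∈ Ioo 0 (π / 2)) :
    x - sin x < (1 - 2 / π) * (x * (1 - cos x)) := by
  have hD := huygensDefect_pos hx
  rw [huygensDefect] at hD
  rw [← sub_pos]
  field_simp
  linarith

theorem circular_sum_lt_one_iff {q x : ℝ} (hx : x ∈ Ioo 0 (π / 2)) :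
    (1 - q) * x / sin x + q * x / tan x < 1 ↔ x - sin x < q * (x * (1 - cos x)) := by
  have hsin : 0 < sin x := sin_pos_of_pos_of_lt_pi hx.1 (by linarith [hx.2, pi_pos])
  rw [tan_eq_sin_div_cos, div_div_eq_mul_div, ← add_div, div_lt_one hsin]
  constructor <;> intro h <;> linarith

theorem huygens_type_q_circular_reciprocal (q : ℝ) :
    (∀ x : ℝ, 0 < x → x < π / 2 →
      1 > (1 - q) * x / Real.sin x + q * x / Real.tan x) ↔ q ≥ 1 - 2 / π := by
  have hπ := pi_pos
  constructor
  · intro h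
    have hclosed : IsClosed {x : ℝ | x - sin x ≤ q * (x * (1 - cos x))} :=
      isClosed_le (by fun_prop) (by fun_prop)
    have hsub : Ioo 0 (π / 2) ⊆ {x : ℝ | x - sin x ≤ q * (x * (1 - cos x))} :=
      fun x hx => ((circular_sum_lt_one_iff hx).1 (h x hx.1 hx.2)).le
    have hend : π / 2 ∈ closure (Ioo 0 (π / 2)) := by
      rw [closure_Ioo pi_div_two_pos.ne]
      exact right_mem_Icc.2 pi_div_two_pos.le
    have hle : π / 2 - 1 ≤ q * (π / 2) := by
      simpa using hclosed.closure_subset_iff.2 hsub hend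
    have : 1 - q ≤ 2 / π := by
      rw [le_div_iff₀ hπ]
      linarith
    linarith
  · intro hq x hx0 hx
    have hx' : x ∈ Ioo 0 (π / 2) := ⟨hx0, hx⟩
    rw [gt_iff_lt, circular_sum_lt_one_iff hx']
    calc x - sin x < (1 - 2 / π) * (x * (1 - cos x)) := sub_sin_lt_of_mem_Ioo hx'
      _ ≤ q * (x * (1 - cos x)) := by
        gcongr
        exact mul_nonneg hx0.le (sub_nonneg.2 (cos_le_one x))
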